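/- Let a₁, a₂, a₃, b₁, b₂, b₃ be real numbers with |a_j| ≤ 1/√2 and |b_j| ≤ 1/√2 for j = 1,2,3. Then the 4×4 matrix M = (1/2)Λ₀₀ + (1/3)(a₁b₁ Λ₁₁ + a₂b₂ Λ₂₂ + a₃b₃ Λ₃₃) is a density matrix (Hermitian, positive semidefinite, trace 1). Its eigenvalues are 1/4 + (1/6)(−a₁b₁ − a₂b₂ − a₃b₃), 1/4 + (1/6)(−a₁b₁ + a₂b₂ + a₃b₃), 1/4 + (1/6)(a₁b₁ − a₂b₂ + a₃b₃), and 1/4 + (1/6)(a₁b₁ + a₂b₂ − a₃b₃). -/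

import Mathlib

/-!
The Bell basis simultaneously diagonalises `σ₁ ⊗ σ₁`, `σ₂ ⊗ σ₂` and `σ₃ ⊗ σ₃`, with sign
patterns `(±1, ±1, ±1)` whose product is always `-1`. Hence `M` is unitarily similar to the
diagonal matrix of the four numbers `1/4 + (x ± y ± z)/6`, where `x = a₁b₁`, `y = a₂b₂`,
`z = a₃b₃`. The bounds give `|x|, |y|, |z| ≤ 1/2`, so these numbers are nonnegative, and they
sum to `1`.
-/

open Matrix Kronecker ComplexOrder Polynomial

noncomputable def lam : Fin 4 → Matrix (Fin 2) (Fin 2) ℂ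
  | 0 => ((Real.sqrt 2 : ℂ))⁻¹ • !![1, 0; 0, 1]
  | 1 => ((Real.sqrt 2 : ℂ))⁻¹ • !![0, 1; 1, 0]
  | 2 => ((Real.sqrt 2 : ℂ))⁻¹ • !![0, -Complex.I; Complex.I, 0]
  | 3 => ((Real.sqrt 2 : ℂ))⁻¹ • !![1, 0; 0, -1]

noncomputable def Lam (j k : Fin 4) : Matrix (Fin 2 × Fin 2) (Fin 2 × Fin 2) ℂ :=
  lam j ⊗ₖ lam k

section Conj

variable {n R : Type*} [Fintype n] [DecidableEq n] [CommRing R] {P Q : Matrix n n R}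

theorem Matrix.trace_mul_mul_of_mul_eq_one (h : Q * P = 1) (N : Matrix n n R) :
    (P * N * Q).trace = N.trace := by
  rw [trace_mul_comm, ← mul_assoc, h, one_mul]

theorem Matrix.charpoly_mul_mul_of_mul_eq_one (h : Q * P = 1) (N : Matrix n n R) :
    (P * N * Q).charpoly = N.charpoly := by
  rw [charpoly_mul_comm, ← mul_assoc, h, one_mul]

end Conj

theorem Matrix.conjTranspose_mul_diagonal_mul_apply {m n α : Type*} [Fintype m]
    [DecidableEq m] [CommSemiring α] [StarRing α] (B : Matrix m n α) (d : m → α) (u v : n) :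
    (Bᴴ * diagonal d * B) u v = ∑ b, star (B b u) * d b * B b v := by
  rw [mul_apply]
  simp [mul_diagonal]

lemma abs_mul_le_half {a b : ℝ} (ha : |a| ≤ 1 / Real.sqrt 2) (hb : |b| ≤ 1 / Real.sqrt 2) :
    |a * b| ≤ 1 / 2 := by
  calc |a * b| = |a| * |b| := abs_mul a b
    _ ≤ 1 / Real.sqrt 2 * (1 / Real.sqrt 2) :=
        mul_le_mul ha hb (abs_nonneg b) ((abs_nonneg a).trans ha)
    _ = 1 / 2 := by rw [div_mul_div_comm, Real.mul_self_sqrt zero_le_two, one_mul]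

lemma ofReal_sqrt_two_sq : ((Real.sqrt 2 : ℂ)) ^ 2 = 2 := by
  rw [← Complex.ofReal_pow, Real.sq_sqrt zero_le_two]
  norm_num

-- Row `(p, q)` is the Bell state `(|0, q⟩ + (-1)^p |1, q + 1⟩) / √2`.
noncomputable def bell : Matrix (Fin 2 × Fin 2) (Fin 2 × Fin 2) ℂ :=
  ((Real.sqrt 2 : ℂ))⁻¹ • Matrix.of fun b v =>
    if v.2 = b.2 + v.1 then (-1) ^ (b.1.val * v.1.val) else 0

lemma bell_mul_conjTranspose : bell * bellᴴ = 1 := by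
  ext ⟨p, q⟩ ⟨r, s⟩
  fin_cases p <;> fin_cases q <;> fin_cases r <;> fin_cases s <;>
    simp [bell, mul_apply, Fintype.sum_prod_type] <;> ring_nf <;> simp [ofReal_sqrt_two_sq]

-- Eigenvalue of `σⱼ ⊗ σⱼ` on the Bell state `(p, q)`; for `j = 2` it comes from
-- `σ₂ ⊗ σ₂ = -(σ₁ ⊗ σ₁)(σ₃ ⊗ σ₃)`.
def pauliSign : Fin 4 → Fin 2 × Fin 2 → ℝ
  | 0 => fun _ => 1
  | 1 => fun b => (-1) ^ b.1.val
  | 2 => fun b => -(-1) ^ (b.1.val + b.2.val)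
  | 3 => fun b => (-1) ^ b.2.val

noncomputable def bellEigenvalue (x y z : ℝ) (b : Fin 2 × Fin 2) : ℝ :=
  1 / 4 + 1 / 6 * (x * pauliSign 1 b + y * pauliSign 2 b + z * pauliSign 3 b)

set_option maxHeartbeats 1000000 in
lemma Lam_self_eq_bell_conj (j : Fin 4) :
    Lam j j = bellᴴ * diagonal (fun b => (2⁻¹ * pauliSign j b : ℂ)) * bell := by
  ext ⟨p, q⟩ ⟨r, s⟩
  rw [conjTranspose_mul_diagonal_mul_apply]
  fin_cases j <;> fin_cases p <;> fin_cases q <;> fin_cases r <;> fin_cases s <;>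
    simp [bell, Lam, lam, pauliSign, Fintype.sum_prod_type, kroneckerMap_apply] <;> ring_nf <;>
    simp [ofReal_sqrt_two_sq]

lemma Lam_combination_eq_bell_conj (x y z : ℝ) :
    (1 / 2 : ℂ) • Lam 0 0 +
        (1 / 3 : ℂ) • ((x : ℂ) • Lam 1 1 + (y : ℂ) • Lam 2 2 + (z : ℂ) • Lam 3 3) =
      bellᴴ * diagonal (fun b => (bellEigenvalue x y z b : ℂ)) * bell := by
  have hdiag : diagonal (fun b => (bellEigenvalue x y z b : ℂ)) =
      (1 / 2 : ℂ) • diagonal (fun b => (2⁻¹ * pauliSign 0 b : ℂ)) +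
        (1 / 3 : ℂ) • ((x : ℂ) • diagonal (fun b => (2⁻¹ * pauliSign 1 b : ℂ)) +
          (y : ℂ) • diagonal (fun b => (2⁻¹ * pauliSign 2 b : ℂ)) +
          (z : ℂ) • diagonal (fun b => (2⁻¹ * pauliSign 3 b : ℂ))) := by
    ext u v
    rcases eq_or_ne u v with rfl | huv
    · simp [bellEigenvalue, pauliSign]
      ring
    · simp [huv]
  simp only [hdiag, Lam_self_eq_bell_conj, Matrix.mul_add, Matrix.add_mul, Matrix.mul_smul,
    Matrix.smul_mul]

lemma bellEigenvalue_nonneg {x y z : ℝ} (hx : |x| ≤ 1 / 2) (hy : |y| ≤ 1 / 2) (hz : |z| ≤ 1 / 2)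
    (b : Fin 2 × Fin 2) : 0 ≤ bellEigenvalue x y z b := by
  obtain ⟨hx₁, hx₂⟩ := abs_le.mp hx
  obtain ⟨hy₁, hy₂⟩ := abs_le.mp hy
  obtain ⟨hz₁, hz₂⟩ := abs_le.mp hz
  rcases b with ⟨p, q⟩
  fin_cases p <;> fin_cases q <;> simp [bellEigenvalue, pauliSign] <;> linarith

lemma sum_bellEigenvalue (x y z : ℝ) : ∑ b, bellEigenvalue x y z b = 1 := by
  simp only [Fintype.sum_prod_type, Fin.sum_univ_two, bellEigenvalue, pauliSign, Fin.val_zero,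
    Fin.val_one]
  ring

lemma prod_X_sub_C_bellEigenvalue (x y z : ℝ) :
    ∏ b, (X - C ((bellEigenvalue x y z b : ℝ) : ℂ)) =
      (X - C ((1 / 4 + (1 / 6) * (-x - y - z) : ℝ) : ℂ)) *
      (X - C ((1 / 4 + (1 / 6) * (-x + y + z) : ℝ) : ℂ)) *
      (X - C ((1 / 4 + (1 / 6) * (x - y + z) : ℝ) : ℂ)) *
      (X - C ((1 / 4 + (1 / 6) * (x + y - z) : ℝ) : ℂ)) := by
  simp only [Fintype.prod_prod_type, Fin.prod_univ_two, bellEigenvalue, pauliSign, Fin.val_zero,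
    Fin.val_one]
  ring_nf

theorem stmt_14 (a1 a2 a3 b1 b2 b3 : ℝ)
    (ha1 : |a1| ≤ 1 / Real.sqrt 2) (ha2 : |a2| ≤ 1 / Real.sqrt 2)
    (ha3 : |a3| ≤ 1 / Real.sqrt 2) (hb1 : |b1| ≤ 1 / Real.sqrt 2)
    (hb2 : |b2| ≤ 1 / Real.sqrt 2) (hb3 : |b3| ≤ 1 / Real.sqrt 2)
    (M : Matrix (Fin 2 × Fin 2) (Fin 2 × Fin 2) ℂ)
    (hM : M = (1 / 2 : ℂ) • Lam 0 0 +
        (1 / 3 : ℂ) • (((a1 * b1 : ℝ) : ℂ) • Lam 1 1 + ((a2 * b2 : ℝ) : ℂ) • Lam 2 2 +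
          ((a3 * b3 : ℝ) : ℂ) • Lam 3 3)) :
    M.IsHermitian ∧ M.PosSemidef ∧ M.trace = 1 ∧
    M.charpoly =
      (X - C (((1 / 4 + (1 / 6) * (-(a1 * b1) - a2 * b2 - a3 * b3) : ℝ)) : ℂ)) *
      (X - C (((1 / 4 + (1 / 6) * (-(a1 * b1) + a2 * b2 + a3 * b3) : ℝ)) : ℂ)) *
      (X - C (((1 / 4 + (1 / 6) * (a1 * b1 - a2 * b2 + a3 * b3) : ℝ)) : ℂ)) *
      (X - C (((1 / 4 + (1 / 6) * (a1 * b1 + a2 * b2 - a3 * b3) : ℝ)) : ℂ)) := by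
  set ev := bellEigenvalue (a1 * b1) (a2 * b2) (a3 * b3)
  have hM' : M = bellᴴ * diagonal (fun b => (ev b : ℂ)) * bell :=
    hM.trans (Lam_combination_eq_bell_conj _ _ _)
  have hpsd : M.PosSemidef := by
    rw [hM']
    refine (posSemidef_diagonal_iff.mpr fun b => ?_).conjTranspose_mul_mul_same bell
    exact Complex.zero_le_real.mpr <| bellEigenvalue_nonneg (abs_mul_le_half ha1 hb1)
      (abs_mul_le_half ha2 hb2) (abs_mul_le_half ha3 hb3) b
  refine ⟨hpsd.isHermitian, hpsd, ?_, ?_⟩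
  · rw [hM', trace_mul_mul_of_mul_eq_one bell_mul_conjTranspose, trace_diagonal,
      ← Complex.ofReal_sum, sum_bellEigenvalue, Complex.ofReal_one]
  · rw [hM', charpoly_mul_mul_of_mul_eq_one bell_mul_conjTranspose, charpoly_diagonal,
      prod_X_sub_C_bellEigenvalue]
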